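/- Let A_S be an Artin–Tits monoid and let s_0, s_1, …, s_k ∈ S be generators such that for each i, s_i does not commute with s_{i+1} (i.e. m(s_i,s_{i+1}) ≥ 3) and s_i ≠ s_{i+2}. If some positive word representing an element α ∈ A_S^+ contains s_0 s_1 ⋯ s_k as a (not necessarily contiguous) subsequence, then every positive word representing α contains s_0 s_1 ⋯ s_k as a subsequence. -/

import Mathlib

namespace ArtinTits

variable {S : Type*}

/-- The alternating word `s t s t ⋯` of length `m`. -/
def altWord (m : ℕ) (s t : S) : List S :=
  (List.range m).map fun i => if i % 2 = 0 then s else t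

/-- One application of a defining braid relation of the Artin–Tits monoid attached to the
Coxeter matrix `M` (where `M s t = 0` encodes `m(s,t) = ∞`, i.e. no relation): an occurrence
of the alternating word `s t s ⋯` of length `m(s,t)` is replaced by `t s t ⋯`. -/
def BraidStep (M : CoxeterMatrix S) (w w' : List S) : Prop :=
  ∃ (u v : List S) (s t : S), M s t ≠ 0 ∧
    w = u ++ altWord (M s t) s t ++ v ∧ w' = u ++ altWord (M s t) t s ++ v

/-- Two positive words represent the same element of the Artin–Tits monoid iff they are
related by a finite sequence of applications of the defining relations. -/
def SameElement (M : CoxeterMatrix S) : List S → List S → Prop :=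
  Relation.EqvGen (BraidStep M)

lemma altWord_take (k m : ℕ) (hk : k ≤ m) (s t : S) :
    (altWord m s t).take k = altWord k s t := by
  simp [altWord, ← List.map_take, List.take_range, Nat.min_eq_left hk]

lemma altWord_prefix_sublist (k m : ℕ) (hk : k ≤ m) (s t : S) :
    (altWord k s t).Sublist (altWord m s t) := by
  rw [← altWord_take k m hk]
  exact (List.take_prefix _ _).sublist

lemma mem_altWord {m : ℕ} {s t a : S} (h : a ∈ altWord m s t) : a = s ∨ a = t := by
  simp only [altWord, List.mem_map] at h
  obtain ⟨i, -, hi⟩ := h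
  split at hi <;> [left; right] <;> exact hi.symm

lemma braidStep_symm {M : CoxeterMatrix S} {w w' : List S} (h : BraidStep M w w') :
    BraidStep M w' w := by
  obtain ⟨u, v, s, t, hm, h1, h2⟩ := h
  exact ⟨u, v, t, s, by rwa [M.symmetric t s], by rwa [M.symmetric t s], by
    rwa [M.symmetric t s]⟩

lemma step_preserves (M : CoxeterMatrix S) (L : List S)
    (hadj : L.Chain' fun a b => a ≠ b ∧ M a b ≠ 2)
    (hskip : ∀ (i : ℕ) (h : i + 2 < L.length),
      L.get ⟨i, Nat.lt_of_le_of_lt (Nat.le_add_right i 2) h⟩ ≠ L.get ⟨i + 2, h⟩)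
    {w w' : List S} (h : BraidStep M w w') (hw : L.Sublist w) : L.Sublist w' := by
  obtain ⟨u, v, s, t, hm, rfl, rfl⟩ := h
  by_cases hst : s = t
  · subst hst; exact hw
  have hm2 : 2 ≤ M s t := by
    have := M.off_diagonal s t hst
    omega
  rw [List.append_assoc] at hw ⊢
  rw [List.sublist_append_iff] at hw
  obtain ⟨L1, L23, hLeq, h1, h23⟩ := hw
  rw [List.sublist_append_iff] at h23
  obtain ⟨B, L2, rfl, hB, h2⟩ := h23
  subst hLeq
  refine List.sublist_append_iff.mpr ⟨L1, B ++ L2, rfl, h1,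
    List.sublist_append_iff.mpr ⟨B, L2, rfl, ?_, h2⟩⟩
  have hmem : ∀ a ∈ B, a = s ∨ a = t := fun a ha => mem_altWord (hB.subset ha)
  have hchB : B.Chain' (fun a b => a ≠ b ∧ M a b ≠ 2) :=
    hadj.infix ⟨L1, L2, by simp⟩
  have pre2 : ([t, s] : List S).Sublist (altWord (M s t) t s) := by
    have := altWord_prefix_sublist 2 (M s t) hm2 t s
    simpa [altWord, List.range_succ] using this
  match B, hmem, hchB with
  | [], _, _ => exact List.nil_sublist _
  | [b], hmem, _ =>
    rcases hmem b (by simp) with hb | hb <;> rw [hb]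
    · exact ((List.singleton_sublist.mpr (by simp)).trans pre2)
    · exact ((List.singleton_sublist.mpr (by simp)).trans pre2)
  | [b, c], hmem, hch =>
    have hbc : b ≠ c ∧ M b c ≠ 2 := (List.isChain_cons_cons.mp hch).1
    rcases hmem b (by simp) with hb | hb <;> rcases hmem c (by simp) with hc | hc
    · exact absurd (hb.trans hc.symm) hbc.1
    · -- B = [s, t] : need M s t ≥ 3
      have hm3 : 3 ≤ M s t := by
        have h1 := M.off_diagonal s t hst
        have h2 := hbc.2
        rw [hb, hc] at h2
        omega
      have pre3 : ([t, s, t] : List S).Sublist (altWord (M s t) t s) := by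
        have := altWord_prefix_sublist 3 (M s t) hm3 t s
        simpa [altWord, List.range_succ] using this
      rw [hb, hc]
      exact ((by simp : ([s, t] : List S).Sublist [t, s, t]).trans pre3)
    · rw [hb, hc]; exact pre2
    · exact absurd (hb.trans hc.symm) hbc.1
  | b0 :: b1 :: b2 :: r, hmem, hch =>
    exfalso
    have h01 : b0 ≠ b1 := (List.isChain_cons_cons.mp hch).1.1
    have h12 : b1 ≠ b2 := (List.isChain_cons_cons.mp (List.isChain_cons_cons.mp hch).2).1.1
    have hb02 : b0 = b2 := by
      rcases hmem b0 (by simp) with h0 | h0 <;>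
        rcases hmem b1 (by simp) with hh1 | hh1 <;>
        rcases hmem b2 (by simp) with hh2 | hh2 <;> simp_all
    have hlen : L1.length + 2 < (L1 ++ (b0 :: b1 :: b2 :: r ++ L2)).length := by
      simp only [List.length_append, List.length_cons]
      omega
    have e0 : (L1 ++ (b0 :: b1 :: b2 :: r ++ L2))[L1.length]'(by omega) = b0 := by
      rw [List.getElem_append_right le_rfl]
      simp
    have e2 : (L1 ++ (b0 :: b1 :: b2 :: r ++ L2))[L1.length + 2]'hlen = b2 := by
      rw [List.getElem_append_right (by omega : L1.length ≤ L1.length + 2)]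
      simp [Nat.add_sub_cancel_left]
    exact hskip L1.length hlen (by
      rw [List.get_eq_getElem, List.get_eq_getElem, e0, e2, hb02])

/-- Let `L = [s₀, s₁, …, s_k]` be a list of generators such that consecutive entries do not
commute (`sᵢ ≠ sᵢ₊₁` and `m(sᵢ, sᵢ₊₁) ≠ 2`) and `sᵢ ≠ sᵢ₊₂` for all `i`.  If some positive
word representing an element of the Artin–Tits monoid contains `L` as a (not necessarily
contiguous) subsequence, then every positive word representing that element contains `L`
as a subsequence. -/
theorem subsequence_invariant (M : CoxeterMatrix S) (L : List S)
    (hadj : L.Chain' fun a b => a ≠ b ∧ M a b ≠ 2)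
    (hskip : ∀ (i : ℕ) (h : i + 2 < L.length),
      L.get ⟨i, by omega⟩ ≠ L.get ⟨i + 2, h⟩)
    (w w' : List S) (h : SameElement M w w') (hw : L.Sublist w) :
    L.Sublist w' := by
  have key : ∀ x y : List S, SameElement M x y → (L.Sublist x ↔ L.Sublist y) := by
    intro x y hxy
    induction hxy with
    | rel a b hab =>
      exact ⟨step_preserves M L hadj hskip hab,
        step_preserves M L hadj hskip (braidStep_symm hab)⟩
    | refl a => exact Iff.rfl
    | symm a b _ ih => exact ih.symm
    | trans a b c _ _ ih1 ih2 => exact ih1.trans ih2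
  exact (key w w' h).mp hw

end ArtinTits
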